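/- arXiv:math/0210425 — 3 statements merged into one kernel-verified Lean document; each statement's English description precedes it below -/
import Mathlib

section
/- Let F be a distribution function, x₀ a continuity point of F, and ε > 0. If |F̂(x₀) − F(x₀)| ≥ ε for a distribution function F̂, and δ' > 0 satisfies F(x₀+δ') ≤ F(x₀) + ε/2 and F(x₀−δ') ≥ F(x₀) − ε/2, then ∫_{x₀−δ'}^{x₀+δ'} |F̂ − F| ≥ δ'ε/2. -/
open MeasureTheory intervalIntegral

/-
If `F̂(x₀) − F(x₀) ≥ ε`, monotonicity keeps `F̂ − F ≥ ε − ε/2` on all of `[x₀, x₀ + δ']`; if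
`F(x₀) − F̂(x₀) ≥ ε`, it keeps `F − F̂ ≥ ε/2` on `[x₀ − δ', x₀]`. Either way `|F̂ − F| ≥ ε/2` on
an interval of length `δ'` inside the interval of integration.
-/

section MonotoneGap

variable {F G : ℝ → ℝ}

lemma Monotone.intervalIntegrable_abs_sub (hF : Monotone F) (hG : Monotone G) (a b : ℝ) :
    IntervalIntegrable (fun x => |G x - F x|) volume a b :=
  (hG.intervalIntegrable.sub hF.intervalIntegrable).abs

lemma Monotone.mul_le_integral_abs_sub (hF : Monotone F) (hG : Monotone G) {a b c : ℝ}
    (hab : a ≤ b) (hc : c ≤ G a - F b) :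
    (b - a) * c ≤ ∫ x in a..b, |G x - F x| := by
  have hbound : ∀ x ∈ Set.Icc a b, c ≤ |G x - F x| := fun x hx =>
    calc c ≤ G a - F b := hc
      _ ≤ G x - F x := sub_le_sub (hG hx.1) (hF hx.2)
      _ ≤ |G x - F x| := le_abs_self _
  simpa [mul_comm] using
    integral_mono_on hab intervalIntegrable_const (hF.intervalIntegrable_abs_sub hG a b) hbound

lemma Monotone.mul_le_integral_abs_sub' (hF : Monotone F) (hG : Monotone G) {a b c : ℝ}
    (hab : a ≤ b) (hc : c ≤ F a - G b) :
    (b - a) * c ≤ ∫ x in a..b, |G x - F x| := by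
  simpa only [abs_sub_comm] using hG.mul_le_integral_abs_sub hF hab hc

lemma Monotone.integral_abs_sub_mono_interval (hF : Monotone F) (hG : Monotone G)
    {a b c d : ℝ} (hca : c ≤ a) (hab : a ≤ b) (hbd : b ≤ d) :
    ∫ x in a..b, |G x - F x| ≤ ∫ x in c..d, |G x - F x| :=
  integral_mono_interval hca hab hbd (Filter.Eventually.of_forall fun _ => abs_nonneg _)
    (hF.intervalIntegrable_abs_sub hG c d)

end MonotoneGap

theorem stmt8_general (F Fhat : ℝ → ℝ)
    (hF_mono : Monotone F)
    (hFhat_mono : Monotone Fhat)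
    (x₀ : ℝ) (ε : ℝ)
    (hsep : ε ≤ |Fhat x₀ - F x₀|)
    (δ' : ℝ) (hδ' : 0 < δ')
    (h1 : F (x₀ + δ') ≤ F x₀ + ε / 2)
    (h2 : F x₀ - ε / 2 ≤ F (x₀ - δ')) :
    δ' * ε / 2 ≤ ∫ x in (x₀ - δ')..(x₀ + δ'), |Fhat x - F x| := by
  rcases le_abs.mp hsep with hup | hdown
  · calc δ' * ε / 2 = (x₀ + δ' - x₀) * (ε / 2) := by ring
      _ ≤ ∫ x in x₀..(x₀ + δ'), |Fhat x - F x| :=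
        hF_mono.mul_le_integral_abs_sub hFhat_mono (by linarith) (by linarith)
      _ ≤ _ := hF_mono.integral_abs_sub_mono_interval hFhat_mono
        (by linarith) (by linarith) le_rfl
  · calc δ' * ε / 2 = (x₀ - (x₀ - δ')) * (ε / 2) := by ring
      _ ≤ ∫ x in (x₀ - δ')..x₀, |Fhat x - F x| :=
        hF_mono.mul_le_integral_abs_sub' hFhat_mono (by linarith) (by linarith)
      _ ≤ _ := hF_mono.integral_abs_sub_mono_interval hFhat_mono
        le_rfl (by linarith) (by linarith)

/-- If `F` and `F̂` are distribution functions (nondecreasing, right-continuous, with values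
in `[0,1]`), `x₀` a continuity point of `F`, `|F̂(x₀) − F(x₀)| ≥ ε` and `δ' > 0` satisfies
`F(x₀+δ') ≤ F(x₀) + ε/2` and `F(x₀−δ') ≥ F(x₀) − ε/2`, then
`∫_{x₀−δ'}^{x₀+δ'} |F̂ − F| ≥ δ'ε/2`. -/
theorem stmt8 (F Fhat : ℝ → ℝ)
    (hF_mono : Monotone F) (hF_rc : ∀ x, ContinuousWithinAt F (Set.Ici x) x)
    (hF_mem : ∀ x, F x ∈ Set.Icc (0 : ℝ) 1)
    (hFhat_mono : Monotone Fhat) (hFhat_rc : ∀ x, ContinuousWithinAt Fhat (Set.Ici x) x)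
    (hFhat_mem : ∀ x, Fhat x ∈ Set.Icc (0 : ℝ) 1)
    (x₀ : ℝ) (hcont : ContinuousAt F x₀) (ε : ℝ) (hε : 0 < ε)
    (hsep : ε ≤ |Fhat x₀ - F x₀|)
    (δ' : ℝ) (hδ' : 0 < δ')
    (h1 : F (x₀ + δ') ≤ F x₀ + ε / 2)
    (h2 : F x₀ - ε / 2 ≤ F (x₀ - δ')) :
    δ' * ε / 2 ≤ ∫ x in (x₀ - δ')..(x₀ + δ'), |Fhat x - F x| :=
  stmt8_general F Fhat hF_mono hFhat_mono x₀ ε hsep δ' hδ' h1 h2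
end

section
/- (Consistency of the grouped cells estimator.) Let X be multinomial(n, p_M) with M = M_n, groups 0 = k_0 < … < k_m = M. Assume m/n → 0, sup_j (k_j − k_{j−1})/M → 0, and sup_{0<u≤1}|g_M(u) − g(u)| → 0 for some g continuous on [0,1]. Then F̂_M(x) = (1/M) Σ_{j=1}^m (k_j−k_{j−1}) 1_{[M X̄_j/(n(k_j−k_{j−1})) ≤ x]} converges to F(x) in probability at every continuity point x of F, where F is the distribution function of g(U) with U uniform(0,1]. -/
/-!
Let `A_j = M p̄_j / (k_j - k_{j-1})` be the mean of `g_M` over the cell of group `j`, of length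
`w_j = (k_j - k_{j-1}) / M`. Uniform convergence of `g_M` and uniform continuity of `g` give
`|A_j - g| ≤ η` on that cell for large `t`, so the step function `G(y) = ∑ w_j 1[A_j ≤ y]`
satisfies `F(y - η) ≤ G(y) ≤ F(y + η)`. The estimator `F̂_M(x)` lies between `G(x - δ)` and
`G(x + δ)` up to the total length of the groups whose statistic `M X̄_j / (n (k_j - k_{j-1}))`
is more than `δ` away from `A_j`. Markov's inequality for that length, together with
Chebyshev's inequality for each group count `X̄_j` (mean `n p̄_j`, variance `n p̄_j (1 - p̄_j)`),
bounds the probability of a deviation `ε` by `(2/ε) ∑_j A_j / (n δ²) = O(m/n) → 0`.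
-/

open MeasureTheory Finset Filter

/-- `X_1, …, X_M` (cells indexed by `1, …, M`) form a multinomial`(n, p)` vector:
for every vector of counts `c` with total `n`, the probability that `X_i = c_i` for all
`i = 1, …, M` equals `n! / (c_1! ⋯ c_M!) · p_1^{c_1} ⋯ p_M^{c_M}`. -/
def IsMultinomial {Ω : Type*} [MeasurableSpace Ω] (P : Measure Ω) (n M : ℕ)
    (p : ℕ → ℝ) (X : ℕ → Ω → ℕ) : Prop :=
  ∀ c : ℕ → ℕ, (∑ i ∈ Finset.Icc 1 M, c i) = n →
    (P {ω | ∀ i ∈ Finset.Icc 1 M, X i ω = c i}).toReal =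
      ((n.factorial : ℝ) / ∏ i ∈ Finset.Icc 1 M, ((c i).factorial : ℝ)) *
        ∏ i ∈ Finset.Icc 1 M, (p i) ^ (c i)

lemma sum_filter_lt_le_sum_mul_div {α : Type*} {D : Finset α} {w B : α → ℝ}
    (hw : ∀ c ∈ D, 0 ≤ w c) (hB : ∀ c ∈ D, 0 ≤ B c) {θ : ℝ} (hθ : 0 < θ) :
    ∑ c ∈ D with θ < B c, w c ≤ (∑ c ∈ D, w c * B c) / θ := by
  rw [le_div_iff₀ hθ, sum_mul]
  calc ∑ c ∈ D with θ < B c, w c * θ ≤ ∑ c ∈ D with θ < B c, w c * B c :=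
        sum_le_sum fun c hc => mul_le_mul_of_nonneg_left (mem_filter.1 hc).2.le
          (hw c (mem_filter.1 hc).1)
    _ ≤ ∑ c ∈ D, w c * B c :=
        sum_le_sum_of_subset_of_nonneg (filter_subset _ _) fun c hc _ =>
          mul_nonneg (hw c hc) (hB c hc)

lemma sum_filter_lt_abs_le_sum_mul_sq_div {α : Type*} {D : Finset α} {w f : α → ℝ}
    (hw : ∀ c ∈ D, 0 ≤ w c) {r : ℝ} (hr : 0 < r) :
    ∑ c ∈ D with r < |f c|, w c ≤ (∑ c ∈ D, w c * f c ^ 2) / r ^ 2 := by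
  have hfilter : D.filter (fun c => r < |f c|) = D.filter (fun c => r ^ 2 < f c ^ 2) :=
    filter_congr fun c _ => by rw [sq_lt_sq, abs_of_pos hr]
  rw [hfilter]
  exact sum_filter_lt_le_sum_mul_div hw (fun c _ => sq_nonneg (f c)) (by positivity)

section MultinomialWeight

variable {ι : Type*} {s : Finset ι} {p : ι → ℝ}

noncomputable def multinomialWeight (s : Finset ι) (p : ι → ℝ) (c : ι → ℕ) : ℝ :=
  Nat.multinomial s c * ∏ i ∈ s, p i ^ c i

lemma multinomialWeight_nonneg (hp : ∀ i ∈ s, 0 ≤ p i) (c : ι → ℕ) :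
    0 ≤ multinomialWeight s p c :=
  mul_nonneg (Nat.cast_nonneg _) (prod_nonneg fun i hi => pow_nonneg (hp i hi) _)

lemma sum_multinomialWeight [DecidableEq ι] (s : Finset ι) (p : ι → ℝ) (n : ℕ) :
    ∑ c ∈ piAntidiag s n, multinomialWeight s p c = (∑ i ∈ s, p i) ^ n :=
  (sum_pow_eq_sum_piAntidiag s p n).symm

lemma prod_add_single_one [DecidableEq ι] {M : Type*} [CommMonoid M] {i : ι} (hi : i ∈ s)
    (f : ι → ℕ → M) (c : ι → ℕ) :
    ∏ j ∈ s, f j ((c + Pi.single i 1 : ι → ℕ) j) = f i (c i + 1) * ∏ j ∈ s.erase i, f j (c j) := by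
  rw [← mul_prod_erase s _ hi]
  congr 1
  · simp
  · exact prod_congr rfl fun j hj => by simp [ne_of_mem_erase hj]

lemma sum_add_single_one [DecidableEq ι] {i : ι} (hi : i ∈ s) (c : ι → ℕ) :
    ∑ j ∈ s, (c + Pi.single i 1 : ι → ℕ) j = ∑ j ∈ s, c j + 1 := by
  simp [sum_add_distrib, hi]

lemma succ_mul_multinomial_add_single [DecidableEq ι] {i : ι} (hi : i ∈ s) (c : ι → ℕ) :
    (c i + 1) * Nat.multinomial s (c + Pi.single i 1) =
      (∑ j ∈ s, c j + 1) * Nat.multinomial s c := by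
  have hspec := Nat.multinomial_spec s (c + Pi.single i 1)
  have hspec' := Nat.multinomial_spec s c
  rw [prod_add_single_one hi (fun _ k => k.factorial), sum_add_single_one hi,
    Nat.factorial_succ] at hspec
  rw [← mul_prod_erase s _ hi] at hspec'
  have hpos : 0 < (c i).factorial * ∏ j ∈ s.erase i, (c j).factorial := by positivity
  refine Nat.eq_of_mul_eq_mul_left hpos ?_
  calc _ = (c i + 1) * (c i).factorial * (∏ j ∈ s.erase i, (c j).factorial) *
        Nat.multinomial s (c + Pi.single i 1) := by ring
    _ = _ := by rw [hspec, Nat.factorial_succ, ← hspec']; ring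

lemma multinomialWeight_add_single [DecidableEq ι] {i : ι} (hi : i ∈ s) (c : ι → ℕ) :
    (c i + 1) * multinomialWeight s p (c + Pi.single i 1) =
      (∑ j ∈ s, c j + 1) * p i * multinomialWeight s p c := by
  have h := congrArg (Nat.cast (R := ℝ)) (succ_mul_multinomial_add_single hi c)
  push_cast at h
  rw [multinomialWeight, multinomialWeight, prod_add_single_one hi (fun j k => p j ^ k),
    ← mul_prod_erase s _ hi, pow_succ]
  push_cast
  linear_combination (p i ^ c i * p i * ∏ j ∈ s.erase i, p j ^ c j) * h

lemma sum_piAntidiag_succ_mul_apply [DecidableEq ι] {i : ι} (hi : i ∈ s) (n : ℕ)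
    (G : (ι → ℕ) → ℝ) :
    ∑ c ∈ piAntidiag s (n + 1), (c i : ℝ) * G c =
      ∑ c ∈ piAntidiag s n, ((c i : ℝ) + 1) * G (c + Pi.single i 1) := by
  have hmaps : (piAntidiag s n).map (addRightEmbedding (Pi.single i 1)) ⊆
      piAntidiag s (n + 1) := by
    intro c' hc'
    obtain ⟨c, hc, rfl⟩ := mem_map.1 hc'
    rw [mem_piAntidiag] at hc ⊢
    refine ⟨by simp only [addRightEmbedding_apply, sum_add_single_one hi, hc.1], fun j hj => ?_⟩
    by_cases hji : j = i
    · exact hji ▸ hi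
    · exact hc.2 j (by simpa [hji] using hj)
  -- a vector of `piAntidiag s (n + 1)` outside the image of `c ↦ c + eᵢ` has `c i = 0`
  rw [← sum_subset hmaps, sum_map]
  · simp
  · intro c hc hcmap
    by_contra hne
    have hci : c i ≠ 0 := by rintro h; simp [h] at hne
    have hsplit : c - Pi.single i 1 + Pi.single i 1 = c := by
      funext j
      by_cases hji : j = i
      · subst hji; simp; omega
      · simp [hji]
    refine hcmap (mem_map.2 ⟨c - Pi.single i 1, ?_, hsplit⟩)
    rw [mem_piAntidiag] at hc ⊢
    refine ⟨?_, fun j hj => hc.2 j fun h => hj (by simp [h])⟩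
    have hsum : ∑ j ∈ s, c j = n + 1 := hc.1
    have := sum_add_single_one hi (c - Pi.single i 1)
    rw [hsplit, hsum] at this
    change ∑ j ∈ s, (c - Pi.single i 1 : ι → ℕ) j = n
    omega

lemma sum_multinomialWeight_mul_apply_mul [DecidableEq ι] {i : ι} (hi : i ∈ s) (n : ℕ)
    (G : (ι → ℕ) → ℝ) :
    ∑ c ∈ piAntidiag s (n + 1), multinomialWeight s p c * c i * G c =
      (n + 1) * p i * ∑ c ∈ piAntidiag s n, multinomialWeight s p c * G (c + Pi.single i 1) := by
  calc _ = ∑ c ∈ piAntidiag s (n + 1), (c i : ℝ) * (multinomialWeight s p c * G c) :=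
        sum_congr rfl fun c _ => by ring
    _ = ∑ c ∈ piAntidiag s n, ((c i : ℝ) + 1) * multinomialWeight s p (c + Pi.single i 1) *
          G (c + Pi.single i 1) := by
        rw [sum_piAntidiag_succ_mul_apply hi]
        exact sum_congr rfl fun c _ => by ring
    _ = _ := by
        rw [mul_sum]
        refine sum_congr rfl fun c hc => ?_
        rw [multinomialWeight_add_single hi, (mem_piAntidiag.1 hc).1]
        ring

lemma sum_multinomialWeight_mul_apply [DecidableEq ι] (hp : ∑ i ∈ s, p i = 1) {i : ι}
    (hi : i ∈ s) (n : ℕ) :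
    ∑ c ∈ piAntidiag s n, multinomialWeight s p c * c i = n * p i := by
  cases n with
  | zero => simp
  | succ n =>
    have h := sum_multinomialWeight_mul_apply_mul (p := p) hi n fun _ => 1
    simp only [mul_one] at h
    rw [h, sum_multinomialWeight, hp]
    push_cast
    ring

lemma sum_multinomialWeight_mul_sum [DecidableEq ι] (hp : ∑ i ∈ s, p i = 1) {T : Finset ι}
    (hT : T ⊆ s) (n : ℕ) :
    ∑ c ∈ piAntidiag s n, multinomialWeight s p c * ∑ i ∈ T, (c i : ℝ) = n * ∑ i ∈ T, p i := by
  simp_rw [mul_sum]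
  rw [sum_comm]
  exact sum_congr rfl fun i hi => sum_multinomialWeight_mul_apply hp (hT hi) n

lemma sum_multinomialWeight_mul_sum_sq [DecidableEq ι] (hp : ∑ i ∈ s, p i = 1)
    {T : Finset ι} (hT : T ⊆ s) (n : ℕ) :
    ∑ c ∈ piAntidiag s (n + 1), multinomialWeight s p c * (∑ i ∈ T, (c i : ℝ)) ^ 2 =
      (n + 1) * (∑ i ∈ T, p i) * (n * ∑ i ∈ T, p i + 1) := by
  have hshift : ∀ i ∈ T, ∑ c ∈ piAntidiag s n, multinomialWeight s p c *
      ∑ j ∈ T, ((c + Pi.single i 1 : ι → ℕ) j : ℝ) = n * ∑ j ∈ T, p j + 1 := by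
    intro i hi
    have hY : ∀ c : ι → ℕ, ∑ j ∈ T, ((c + Pi.single i 1 : ι → ℕ) j : ℝ) =
        ∑ j ∈ T, (c j : ℝ) + 1 := fun c => by exact_mod_cast sum_add_single_one hi c
    simp only [hY, mul_add, mul_one, sum_add_distrib, sum_multinomialWeight_mul_sum hp hT,
      sum_multinomialWeight, hp, one_pow]
  calc _ = ∑ i ∈ T, ∑ c ∈ piAntidiag s (n + 1),
        multinomialWeight s p c * c i * ∑ j ∈ T, (c j : ℝ) := by
        rw [sum_comm]
        refine sum_congr rfl fun c _ => ?_
        rw [sq, sum_mul, mul_sum]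
        exact sum_congr rfl fun _ _ => by ring
    _ = ∑ i ∈ T, (n + 1) * p i * (n * ∑ j ∈ T, p j + 1) := by
        refine sum_congr rfl fun i hi => ?_
        rw [sum_multinomialWeight_mul_apply_mul (hT hi), hshift i hi]
    _ = _ := by rw [← sum_mul, ← mul_sum]

lemma sum_multinomialWeight_mul_sub_sq [DecidableEq ι] (hp : ∑ i ∈ s, p i = 1)
    {T : Finset ι} (hT : T ⊆ s) (n : ℕ) :
    ∑ c ∈ piAntidiag s n, multinomialWeight s p c * (∑ i ∈ T, (c i : ℝ) - n * ∑ i ∈ T, p i) ^ 2 =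
      n * (∑ i ∈ T, p i) * (1 - ∑ i ∈ T, p i) := by
  cases n with
  | zero => simp
  | succ n =>
    set q := ∑ i ∈ T, p i
    have hexpand : ∀ c, multinomialWeight s p c * (∑ i ∈ T, (c i : ℝ) - (n + 1 : ℕ) * q) ^ 2 =
        multinomialWeight s p c * (∑ i ∈ T, (c i : ℝ)) ^ 2 -
          2 * ((n + 1 : ℕ) * q) * (multinomialWeight s p c * ∑ i ∈ T, (c i : ℝ)) +
          ((n + 1 : ℕ) * q) ^ 2 * multinomialWeight s p c := fun c => by ring
    simp only [hexpand, sum_add_distrib, sum_sub_distrib, ← mul_sum,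
      sum_multinomialWeight_mul_sum_sq hp hT, sum_multinomialWeight_mul_sum hp hT,
      sum_multinomialWeight, hp, one_pow]
    push_cast
    ring

lemma sum_multinomialWeight_filter_lt_abs_sub_le [DecidableEq ι] (hp0 : ∀ i ∈ s, 0 ≤ p i)
    (hp : ∑ i ∈ s, p i = 1) {T : Finset ι} (hT : T ⊆ s) (n : ℕ) {r : ℝ} (hr : 0 < r) :
    ∑ c ∈ piAntidiag s n with r < |∑ i ∈ T, (c i : ℝ) - n * ∑ i ∈ T, p i|,
      multinomialWeight s p c ≤ n * (∑ i ∈ T, p i) / r ^ 2 := by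
  refine (sum_filter_lt_abs_le_sum_mul_sq_div (fun c _ => multinomialWeight_nonneg hp0 c)
    hr).trans ?_
  rw [sum_multinomialWeight_mul_sub_sq hp hT]
  refine div_le_div_of_nonneg_right ?_ (by positivity)
  nlinarith [mul_nonneg (Nat.cast_nonneg n : (0 : ℝ) ≤ n) (sq_nonneg (∑ i ∈ T, p i))]

lemma multinomialWeight_eq_factorial_div {c : ι → ℕ} {n : ℕ} (hc : ∑ i ∈ s, c i = n) :
    multinomialWeight s p c =
      ((n.factorial : ℝ) / ∏ i ∈ s, ((c i).factorial : ℝ)) * ∏ i ∈ s, p i ^ c i := by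
  have h := congrArg (Nat.cast (R := ℝ)) (Nat.multinomial_spec s c)
  rw [hc] at h
  push_cast at h
  rw [multinomialWeight, ← h, mul_div_cancel_left₀]
  exact prod_ne_zero_iff.2 fun i _ => Nat.cast_ne_zero.2 (Nat.factorial_ne_zero _)

end MultinomialWeight

theorem IsMultinomial.measure_le_sum_filter {Ω : Type*} [MeasurableSpace Ω] {P : Measure Ω}
    [IsProbabilityMeasure P] {n M : ℕ} {p : ℕ → ℝ} {X : ℕ → Ω → ℕ}
    (hX : IsMultinomial P n M p X) (hmeas : ∀ i, Measurable (X i))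
    (hp : ∑ i ∈ Icc 1 M, p i = 1) (Q : (ℕ → ℕ) → Prop) [DecidablePred Q] :
    P {ω | Q fun i => if i ∈ Icc 1 M then X i ω else 0} ≤
      ENNReal.ofReal (∑ c ∈ piAntidiag (Icc 1 M) n with Q c, multinomialWeight (Icc 1 M) p c) := by
  set s := Icc 1 M
  set D := piAntidiag s n
  set cnt : Ω → ℕ → ℕ := fun ω i => if i ∈ s then X i ω else 0
  have hcnt : Measurable cnt := measurable_pi_iff.2 fun i => by
    by_cases hi : i ∈ s
    · simpa [cnt, hi] using hmeas i
    · simp [cnt, hi]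
  have hfiber : ∀ c ∈ D, P (cnt ⁻¹' {c}) = ENNReal.ofReal (multinomialWeight s p c) := by
    intro c hc
    rw [mem_piAntidiag] at hc
    have hset : cnt ⁻¹' {c} = {ω | ∀ i ∈ s, X i ω = c i} := by
      ext ω
      simp only [Set.mem_preimage, Set.mem_singleton_iff, Set.mem_ofPred_eq, funext_iff, cnt]
      refine ⟨fun h i hi => by simpa [hi] using h i, fun h i => ?_⟩
      by_cases hi : i ∈ s
      · simp [hi, h i hi]
      · simp only [hi, if_false]
        exact (not_imp_comm.1 (hc.2 i) hi).symm
    rw [hset, multinomialWeight_eq_factorial_div hc.1, ← hX c hc.1,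
      ENNReal.ofReal_toReal (measure_ne_top _ _)]
  have hw : ∀ c ∈ D, 0 ≤ multinomialWeight s p c := fun c hc => by
    rw [multinomialWeight_eq_factorial_div (mem_piAntidiag.1 hc).1, ← hX c (mem_piAntidiag.1 hc).1]
    exact ENNReal.toReal_nonneg
  have hmeasD : ∀ c ∈ D, MeasurableSet (cnt ⁻¹' {c}) := fun c _ => hcnt (measurableSet_singleton c)
  -- the fibres over `D` already carry mass `(∑ p) ^ n = 1`
  have hD : ∀ᵐ ω ∂P, cnt ω ∈ D := by
    have hfull : P (cnt ⁻¹' D) = 1 := by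
      rw [← sum_measure_preimage_singleton D hmeasD, sum_congr rfl hfiber,
        ← ENNReal.ofReal_sum_of_nonneg hw, sum_multinomialWeight, hp, one_pow, ENNReal.ofReal_one]
    exact ae_iff.2 ((prob_compl_eq_zero_iff (hcnt D.measurableSet)).2 hfull)
  calc P {ω | Q (cnt ω)} ≤ P (cnt ⁻¹' (D.filter Q)) :=
        measure_mono_ae (hD.mono fun ω hω hQ => mem_filter.2 ⟨hω, hQ⟩)
    _ = ∑ c ∈ D with Q c, P (cnt ⁻¹' {c}) :=
        (sum_measure_preimage_singleton _ fun c hc => hmeasD c (mem_filter.1 hc).1).symm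
    _ = _ := by
        rw [sum_congr rfl fun c hc => hfiber c (mem_filter.1 hc).1,
          ENNReal.ofReal_sum_of_nonneg fun c hc => hw c (mem_filter.1 hc).1]

section StepCdf

variable {ι : Type*} (J : Finset ι) (w : ι → ℝ)

noncomputable def stepCdf (a : ι → ℝ) (y : ℝ) : ℝ :=
  ∑ j ∈ J, w j * if a j ≤ y then 1 else 0

lemma stepCdf_eq_sum_filter (a : ι → ℝ) (y : ℝ) :
    stepCdf J w a y = ∑ j ∈ J with a j ≤ y, w j := by
  simp [stepCdf, sum_filter]

variable {J w}

lemma stepCdf_le_add (hw : ∀ j ∈ J, 0 ≤ w j) (a b : ι → ℝ) (y δ : ℝ) :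
    stepCdf J w a y ≤
      stepCdf J w b (y + δ) + ∑ j ∈ J, w j * if δ < |a j - b j| then 1 else 0 := by
  rw [stepCdf, stepCdf, ← sum_add_distrib]
  refine sum_le_sum fun j hj => ?_
  rw [← mul_add]
  refine mul_le_mul_of_nonneg_left ?_ (hw j hj)
  split_ifs with hay hby <;> norm_num
  exact hby (by linarith [(abs_le.1 (not_lt.1 ‹¬δ < |a j - b j|›)).1])

lemma abs_stepCdf_sub_le (hw : ∀ j ∈ J, 0 ≤ w j) {a b : ι → ℝ} {y δ c θ : ℝ}
    (hlo : c - θ ≤ stepCdf J w b (y - δ)) (hhi : stepCdf J w b (y + δ) ≤ c + θ) :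
    |stepCdf J w a y - c| ≤ θ + ∑ j ∈ J, w j * if δ < |a j - b j| then 1 else 0 := by
  have hupper := stepCdf_le_add hw a b y δ
  have hlower := stepCdf_le_add hw b a (y - δ) δ
  simp only [sub_add_cancel, abs_sub_comm (b _)] at hlower
  rw [abs_le]
  constructor <;> linarith

variable {α : Type*} [MeasurableSpace α] {μ : Measure α} [IsFiniteMeasure μ] {I : ι → Set α}
  {g : α → ℝ} {a : ι → ℝ} {η : ℝ}

lemma measureReal_le_stepCdf (hcover : ∀ᵐ u ∂μ, ∃ j ∈ J, u ∈ I j)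
    (hclose : ∀ j ∈ J, ∀ u ∈ I j, |a j - g u| ≤ η) (y : ℝ) :
    μ.real {u | g u ≤ y - η} ≤ stepCdf J (fun j => μ.real (I j)) a y := by
  rw [stepCdf_eq_sum_filter]
  refine (ENNReal.toReal_mono (measure_ne_top _ _) (measure_mono_ae ?_)).trans
    (measureReal_biUnion_finset_le _ _)
  filter_upwards [hcover] with u ⟨j, hj, hu⟩ (hgu : g u ≤ y - η)
  have := (abs_le.1 (hclose j hj u hu)).2
  exact Set.mem_biUnion (mem_filter.2 ⟨hj, by linarith⟩) hu

lemma stepCdf_le_measureReal (hI : ∀ j ∈ J, MeasurableSet (I j))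
    (hdisj : (J : Set ι).PairwiseDisjoint I) (hclose : ∀ j ∈ J, ∀ u ∈ I j, |a j - g u| ≤ η)
    (y : ℝ) :
    stepCdf J (fun j => μ.real (I j)) a y ≤ μ.real {u | g u ≤ y + η} := by
  rw [stepCdf_eq_sum_filter, ← measureReal_biUnion_finset (hdisj.subset (filter_subset _ _))
    fun j hj => hI j (mem_filter.1 hj).1]
  refine measureReal_mono (Set.iUnion₂_subset fun j hj u hu => ?_)
  have := (abs_le.1 (hclose j (mem_filter.1 hj).1 u hu)).1
  have := (mem_filter.1 hj).2
  show g u ≤ y + η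
  linarith

end StepCdf

lemma abs_sum_div_card_sub_le {ι : Type*} {s : Finset ι} (hs : s.Nonempty) {f : ι → ℝ}
    {c η : ℝ} (h : ∀ i ∈ s, |f i - c| ≤ η) : |(∑ i ∈ s, f i) / s.card - c| ≤ η := by
  have hcard : (0 : ℝ) < s.card := by exact_mod_cast hs.card_pos
  have hsub : (∑ i ∈ s, f i) / s.card - c = (∑ i ∈ s, (f i - c)) / s.card := by
    rw [sum_sub_distrib, sum_const, nsmul_eq_mul]
    field_simp
  rw [hsub, abs_div, abs_of_pos hcard, div_le_iff₀ hcard]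
  calc |∑ i ∈ s, (f i - c)| ≤ ∑ i ∈ s, |f i - c| := abs_sum_le_sum_abs _ _
    _ ≤ ∑ _i ∈ s, η := sum_le_sum h
    _ = η * s.card := by rw [sum_const, nsmul_eq_mul, mul_comm]

/-- For `f = p` this is the mean of `g_M` over `groupCell M k j`; for `f = X`, divided by `n`,
it is the statistic `M X̄_j / (n (k_j - k_{j-1}))` that `F̂_M` compares with `x`. -/
noncomputable def groupMean (M : ℕ) (k : ℕ → ℕ) (f : ℕ → ℝ) (j : ℕ) : ℝ :=
  M * (∑ i ∈ Ioc (k (j - 1)) (k j), f i) / ((k j : ℝ) - k (j - 1))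

def groupCell (M : ℕ) (k : ℕ → ℕ) (j : ℕ) : Set ℝ :=
  Set.Ioc ((k (j - 1) : ℝ) / M) (k j / M)

noncomputable def groupedCellsEstimator (n M m : ℕ) (k : ℕ → ℕ) (X : ℕ → ℝ) (x : ℝ) : ℝ :=
  (1 / M : ℝ) * ∑ j ∈ Icc 1 m, ((k j : ℝ) - k (j - 1)) *
    (if (M : ℝ) * (∑ i ∈ Ioc (k (j - 1)) (k j), X i) / ((n : ℝ) * ((k j : ℝ) - k (j - 1))) ≤ x
      then (1 : ℝ) else 0)

lemma groupedCellsEstimator_eq_stepCdf (n M m : ℕ) (k : ℕ → ℕ) (X : ℕ → ℝ) (x : ℝ) :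
    groupedCellsEstimator n M m k X x =
      stepCdf (Icc 1 m) (fun j => ((k j : ℝ) - k (j - 1)) / M)
        (fun j => groupMean M k X j / n) x := by
  rw [groupedCellsEstimator, stepCdf, mul_sum]
  refine sum_congr rfl fun j _ => ?_
  rw [groupMean, div_div, mul_comm _ (n : ℝ)]
  ring

lemma measurableSet_groupCell {M : ℕ} {k : ℕ → ℕ} {j : ℕ} : MeasurableSet (groupCell M k j) :=
  measurableSet_Ioc

structure IsGrouping (k : ℕ → ℕ) (m M : ℕ) : Prop where
  zero : k 0 = 0
  last : k m = M
  lt_succ : ∀ j < m, k j < k (j + 1)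

namespace IsGrouping

variable {k : ℕ → ℕ} {m M : ℕ}

lemma monotoneOn (hk : IsGrouping k m M) : MonotoneOn k (Set.Iic m) :=
  (strictMonoOn_Iic_of_lt_succ fun j hj => by simpa using hk.lt_succ j hj).monotoneOn

lemma sub_one_lt (hk : IsGrouping k m M) {j : ℕ} (hj : j ∈ Icc 1 m) : k (j - 1) < k j := by
  obtain ⟨h1, hm⟩ := mem_Icc.1 hj
  simpa [Nat.sub_add_cancel h1] using hk.lt_succ (j - 1) (by omega)

lemma le_last (hk : IsGrouping k m M) {j : ℕ} (hj : j ≤ m) : k j ≤ M :=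
  hk.last ▸ hk.monotoneOn (Set.mem_Iic.2 hj) Set.self_mem_Iic hj

lemma Ioc_subset_Icc (hk : IsGrouping k m M) {j : ℕ} (hj : j ∈ Icc 1 m) :
    Ioc (k (j - 1)) (k j) ⊆ Icc 1 M := fun i hi => by
  have := hk.le_last (mem_Icc.1 hj).2
  simp only [mem_Ioc, mem_Icc] at hi ⊢
  omega

lemma sub_pos (hk : IsGrouping k m M) {j : ℕ} (hj : j ∈ Icc 1 m) :
    (0 : ℝ) < k j - k (j - 1) := by
  simpa using (Nat.cast_lt (α := ℝ)).2 (hk.sub_one_lt hj)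

lemma card_Ioc (hk : IsGrouping k m M) {j : ℕ} (hj : j ∈ Icc 1 m) :
    ((Ioc (k (j - 1)) (k j)).card : ℝ) = k j - k (j - 1) := by
  rw [Nat.card_Ioc, Nat.cast_sub (hk.sub_one_lt hj).le]

lemma groupCell_subset (hk : IsGrouping k m M) {j : ℕ} (hj : j ∈ Icc 1 m) :
    groupCell M k j ⊆ Set.Ioc 0 1 :=
  Set.Ioc_subset_Ioc (by positivity)
    (div_le_one_of_le₀ (by exact_mod_cast hk.le_last (mem_Icc.1 hj).2) (Nat.cast_nonneg M))

lemma pairwiseDisjoint_groupCell (hk : IsGrouping k m M) :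
    (Icc 1 m : Set ℕ).PairwiseDisjoint (groupCell M k) := by
  have key : ∀ i ∈ Icc 1 m, ∀ j ∈ Icc 1 m, i < j →
      Disjoint (groupCell M k i) (groupCell M k j) := by
    intro i hi j hj hij
    rw [mem_Icc] at hi hj
    refine Set.Ioc_disjoint_Ioc_of_le (div_le_div_of_nonneg_right ?_ (Nat.cast_nonneg M))
    exact_mod_cast hk.monotoneOn (Set.mem_Iic.2 hi.2) (Set.mem_Iic.2 (by omega)) (by omega)
  intro i hi j hj hne
  rcases hne.lt_or_gt with h | h
  · exact key i hi j hj h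
  · exact (key j hj i hi h).symm

lemma Ioc_zero_one_subset_biUnion_groupCell (hk : IsGrouping k m M) (hM : 0 < M) :
    Set.Ioc (0 : ℝ) 1 ⊆ ⋃ j ∈ Icc 1 m, groupCell M k j := by
  have hcover := Ioc_subset_biUnion_Ioc m fun j => (k j : ℝ) / M
  have hM' : (M : ℝ) ≠ 0 := Nat.cast_ne_zero.2 hM.ne'
  simp only [hk.zero, hk.last, CharP.cast_eq_zero, zero_div, div_self hM'] at hcover
  refine hcover.trans (Set.iUnion₂_subset fun j hj => ?_)
  refine Set.subset_biUnion_of_mem (u := groupCell M k) (x := j + 1) ?_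
  simpa using mem_range.1 hj

lemma measureReal_groupCell (hk : IsGrouping k m M) {j : ℕ} (hj : j ∈ Icc 1 m) :
    (volume.restrict (Set.Ioc (0 : ℝ) 1)).real (groupCell M k j) =
      ((k j : ℝ) - k (j - 1)) / M := by
  rw [measureReal_restrict_apply measurableSet_groupCell,
    Set.inter_eq_left.2 (hk.groupCell_subset hj), groupCell,
    Real.volume_real_Ioc_of_le (div_le_div_of_nonneg_right (by exact_mod_cast (hk.sub_one_lt hj).le)
      (Nat.cast_nonneg M))]
  ring

lemma abs_groupMean_sub_le (hk : IsGrouping k m M) (hM : 0 < M) {p : ℕ → ℝ} {g : ℝ → ℝ}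
    {η ρ : ℝ}
    (hp : ∀ i ∈ Icc 1 M, |M * p i - g (i / M)| ≤ η / 2)
    (hg : ∀ u ∈ Set.Icc (0 : ℝ) 1, ∀ v ∈ Set.Icc (0 : ℝ) 1, dist u v < ρ →
      dist (g u) (g v) < η / 2)
    (hwidth : ∀ j ∈ Icc 1 m, ((k j : ℝ) - k (j - 1)) / M < ρ) {j : ℕ} (hj : j ∈ Icc 1 m)
    {u : ℝ} (hu : u ∈ groupCell M k j) :
    |groupMean M k p j - g u| ≤ η := by
  have hM' : (0 : ℝ) < M := by exact_mod_cast hM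
  rw [groupMean, mul_sum, ← hk.card_Ioc hj]
  refine abs_sum_div_card_sub_le (nonempty_Ioc.2 (hk.sub_one_lt hj)) fun i hi => ?_
  have hiM : (i : ℝ) / M ∈ groupCell M k j :=
    ⟨div_lt_div_of_pos_right (by exact_mod_cast (mem_Ioc.1 hi).1) hM',
      div_le_div_of_nonneg_right (by exact_mod_cast (mem_Ioc.1 hi).2) hM'.le⟩
  have hdist : dist ((i : ℝ) / M) u < ρ := by
    refine (Real.dist_le_of_mem_Icc (Set.Ioc_subset_Icc_self hiM)
      (Set.Ioc_subset_Icc_self hu)).trans_lt ?_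
    rw [← sub_div]
    exact hwidth j hj
  have hgu := hg _ (Set.Ioc_subset_Icc_self (hk.groupCell_subset hj hiM)) u
    (Set.Ioc_subset_Icc_self (hk.groupCell_subset hj hu)) hdist
  rw [Real.dist_eq] at hgu
  calc |M * p i - g u| ≤ |M * p i - g (i / M)| + |g (i / M) - g u| := abs_sub_le _ _ _
    _ ≤ η / 2 + η / 2 := add_le_add (hp i (hk.Ioc_subset_Icc hj hi)) hgu.le
    _ = η := add_halves η

lemma stepCdf_mem_Icc (hk : IsGrouping k m M) (hM : 0 < M) {g : ℝ → ℝ} {a : ℕ → ℝ} {η : ℝ}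
    (hclose : ∀ j ∈ Icc 1 m, ∀ u ∈ groupCell M k j, |a j - g u| ≤ η) (y : ℝ) :
    stepCdf (Icc 1 m) (fun j => ((k j : ℝ) - k (j - 1)) / M) a y ∈
      Set.Icc ((volume.restrict (Set.Ioc (0 : ℝ) 1)).real {u | g u ≤ y - η})
        ((volume.restrict (Set.Ioc (0 : ℝ) 1)).real {u | g u ≤ y + η}) := by
  have hweights : stepCdf (Icc 1 m) (fun j => ((k j : ℝ) - k (j - 1)) / M) a y =
      stepCdf (Icc 1 m) (fun j => (volume.restrict (Set.Ioc (0 : ℝ) 1)).real (groupCell M k j))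
        a y :=
    sum_congr rfl fun j hj => by dsimp only; rw [hk.measureReal_groupCell hj]
  have hcover : ∀ᵐ u ∂(volume.restrict (Set.Ioc (0 : ℝ) 1)), ∃ j ∈ Icc 1 m, u ∈ groupCell M k j :=
    ae_restrict_of_forall_mem measurableSet_Ioc fun u hu => by
      simpa using hk.Ioc_zero_one_subset_biUnion_groupCell hM hu
  rw [hweights]
  exact ⟨measureReal_le_stepCdf hcover hclose y,
    stepCdf_le_measureReal (fun _ _ => measurableSet_groupCell) hk.pairwiseDisjoint_groupCell
      hclose y⟩

lemma sum_groupMean_le (hk : IsGrouping k m M) (hM : 0 < M) {p : ℕ → ℝ} {g : ℝ → ℝ} {η C : ℝ}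
    (hclose : ∀ j ∈ Icc 1 m, ∀ u ∈ groupCell M k j, |groupMean M k p j - g u| ≤ η)
    (hC : ∀ u ∈ Set.Ioc (0 : ℝ) 1, g u ≤ C) :
    ∑ j ∈ Icc 1 m, groupMean M k p j ≤ m * (C + η) := by
  have hbound : ∀ j ∈ Icc 1 m, groupMean M k p j ≤ C + η := fun j hj => by
    have hright : (k j : ℝ) / M ∈ groupCell M k j :=
      ⟨div_lt_div_of_pos_right (by exact_mod_cast hk.sub_one_lt hj) (by exact_mod_cast hM), le_rfl⟩
    have := (abs_le.1 (hclose j hj _ hright)).2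
    linarith [hC _ (hk.groupCell_subset hj hright)]
  refine (sum_le_sum hbound).trans_eq ?_
  rw [sum_const, Nat.card_Icc, nsmul_eq_mul, Nat.add_sub_cancel]

lemma mul_sum_multinomialWeight_filter_le (hk : IsGrouping k m M) (hM : 0 < M) {p : ℕ → ℝ}
    (hp0 : ∀ i ∈ Icc 1 M, 0 ≤ p i) (hp : ∑ i ∈ Icc 1 M, p i = 1)
    {n : ℕ} (hn : 0 < n) {δ : ℝ} (hδ : 0 < δ) {j : ℕ} (hj : j ∈ Icc 1 m) :
    ((k j : ℝ) - k (j - 1)) / M * ∑ c ∈ piAntidiag (Icc 1 M) n with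
        δ < |groupMean M k (fun i => c i) j / n - groupMean M k p j|,
      multinomialWeight (Icc 1 M) p c ≤ groupMean M k p j / (n * δ ^ 2) := by
  have hΔ : (0 : ℝ) < k j - k (j - 1) := hk.sub_pos hj
  have hM' : (0 : ℝ) < M := by exact_mod_cast hM
  have hn' : (0 : ℝ) < n := by exact_mod_cast hn
  simp only [groupMean]
  set Δ : ℝ := (k j : ℝ) - k (j - 1)
  set T := Ioc (k (j - 1)) (k j)
  have hfilter : ∀ c : ℕ → ℕ, δ < |(M * ∑ i ∈ T, (c i : ℝ)) / Δ / n - (M * ∑ i ∈ T, p i) / Δ| ↔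
      δ * n * Δ / M < |∑ i ∈ T, (c i : ℝ) - n * ∑ i ∈ T, p i| := fun c => by
    have : (M * ∑ i ∈ T, (c i : ℝ)) / Δ / n - (M * ∑ i ∈ T, p i) / Δ =
        M / (n * Δ) * (∑ i ∈ T, (c i : ℝ) - n * ∑ i ∈ T, p i) := by
      field_simp
    rw [this, abs_mul, abs_of_pos (by positivity), div_lt_iff₀ hM', ← lt_div_iff₀' (by positivity)]
    field_simp
  rw [filter_congr fun c _ => hfilter c]
  calc Δ / M * ∑ c ∈ piAntidiag (Icc 1 M) n with
        δ * n * Δ / M < |∑ i ∈ T, (c i : ℝ) - n * ∑ i ∈ T, p i|, multinomialWeight (Icc 1 M) p c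
      ≤ Δ / M * (n * (∑ i ∈ T, p i) / (δ * n * Δ / M) ^ 2) :=
        mul_le_mul_of_nonneg_left (sum_multinomialWeight_filter_lt_abs_sub_le hp0 hp
          (hk.Ioc_subset_Icc hj) n (by positivity)) (by positivity)
    _ = (M * ∑ i ∈ T, p i) / Δ / (n * δ ^ 2) := by
        field_simp

end IsGrouping

lemma sum_mul_ite_div_mem_Ioc {M i : ℕ} (hM : 0 < M) (hi : i ∈ Icc 1 M) (p : ℕ → ℝ) :
    ∑ l ∈ Icc 1 M, (M : ℝ) * p l *
      (if (i : ℝ) / M ∈ Set.Ioc (((l : ℝ) - 1) / M) ((l : ℝ) / M) then (1 : ℝ) else 0) =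
      M * p i := by
  have hM' : (0 : ℝ) < M := by exact_mod_cast hM
  rw [sum_eq_single_of_mem i hi]
  · rw [if_pos ⟨div_lt_div_of_pos_right (by linarith) hM', le_rfl⟩, mul_one]
  · intro l _ hli
    rw [if_neg, mul_zero]
    rw [Set.mem_Ioc, div_lt_div_iff_of_pos_right hM', div_le_div_iff_of_pos_right hM',
      sub_lt_iff_lt_add]
    norm_cast
    omega

lemma abs_mul_sub_le_of_abs_sub_le {M : ℕ} (hM : 0 < M) {p : ℕ → ℝ} {g gM : ℝ → ℝ} {η : ℝ}
    (hgM : ∀ u : ℝ, gM u = ∑ i ∈ Icc 1 M, (M : ℝ) * p i *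
      (if u ∈ Set.Ioc (((i : ℝ) - 1) / M) ((i : ℝ) / M) then (1 : ℝ) else 0))
    (hclose : ∀ u ∈ Set.Ioc (0 : ℝ) 1, |gM u - g u| ≤ η) {i : ℕ} (hi : i ∈ Icc 1 M) :
    |M * p i - g (i / M)| ≤ η := by
  rw [← sum_mul_ite_div_mem_Ioc hM hi, ← hgM]
  obtain ⟨hi1, hiM⟩ := mem_Icc.1 hi
  exact hclose _ ⟨div_pos (Nat.cast_pos.2 hi1) (Nat.cast_pos.2 hM),
    div_le_one_of_le₀ (by exact_mod_cast hiM) (Nat.cast_nonneg M)⟩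

theorem IsMultinomial.measure_lt_sum_deviation_le {Ω : Type*} [MeasurableSpace Ω]
    {P : Measure Ω} [IsProbabilityMeasure P] {n M m : ℕ} {p : ℕ → ℝ} {X : ℕ → Ω → ℕ}
    {k : ℕ → ℕ} (hX : IsMultinomial P n M p X) (hmeas : ∀ i, Measurable (X i))
    (hp0 : ∀ i ∈ Icc 1 M, 0 ≤ p i) (hp : ∑ i ∈ Icc 1 M, p i = 1) (hn : 0 < n) (hM : 0 < M)
    (hk : IsGrouping k m M) {δ θ : ℝ} (hδ : 0 < δ) (hθ : 0 < θ) :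
    P {ω | θ < ∑ j ∈ Icc 1 m, ((k j : ℝ) - k (j - 1)) / M *
        if δ < |groupMean M k (fun i => X i ω) j / n - groupMean M k p j| then 1 else 0} ≤
      ENNReal.ofReal ((∑ j ∈ Icc 1 m, groupMean M k p j) / (θ * n * δ ^ 2)) := by
  set D := piAntidiag (Icc 1 M) n
  set B : (ℕ → ℕ) → ℝ := fun c => ∑ j ∈ Icc 1 m, ((k j : ℝ) - k (j - 1)) / M *
    if δ < |groupMean M k (fun i => c i) j / n - groupMean M k p j| then 1 else 0
  have hw : ∀ j ∈ Icc 1 m, 0 ≤ ((k j : ℝ) - k (j - 1)) / M := fun j hj =>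
    div_nonneg (hk.sub_pos hj).le (Nat.cast_nonneg M)
  have hB : ∀ c ∈ D, 0 ≤ B c := fun c _ =>
    sum_nonneg fun j hj => mul_nonneg (hw j hj) (by split_ifs <;> norm_num)
  have hevent : {ω | θ < ∑ j ∈ Icc 1 m, ((k j : ℝ) - k (j - 1)) / M *
      if δ < |groupMean M k (fun i => X i ω) j / n - groupMean M k p j| then 1 else 0} =
      {ω | θ < B fun i => if i ∈ Icc 1 M then X i ω else 0} := by
    ext ω
    refine Iff.of_eq (congrArg (θ < ·) (sum_congr rfl fun j hj => ?_))
    have : ∀ i ∈ Ioc (k (j - 1)) (k j), ((if i ∈ Icc 1 M then X i ω else 0 : ℕ) : ℝ) = X i ω :=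
      fun i hi => by rw [if_pos (hk.Ioc_subset_Icc hj hi)]
    simp only [groupMean, sum_congr rfl this]
  have hexpect : ∑ c ∈ D, multinomialWeight (Icc 1 M) p c * B c ≤
      ∑ j ∈ Icc 1 m, groupMean M k p j / (n * δ ^ 2) := by
    simp only [B, mul_sum]
    rw [sum_comm]
    refine sum_le_sum fun j hj =>
      le_of_eq_of_le ?_ (hk.mul_sum_multinomialWeight_filter_le hM hp0 hp hn hδ hj)
    rw [sum_filter, mul_sum]
    exact sum_congr rfl fun c _ => by split_ifs <;> ring
  rw [hevent]
  refine (hX.measure_le_sum_filter hmeas hp (fun c => θ < B c)).trans (ENNReal.ofReal_le_ofReal ?_)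
  refine (sum_filter_lt_le_sum_mul_div (fun c _ => multinomialWeight_nonneg hp0 c) hB hθ).trans ?_
  rw [← sum_div] at hexpect
  exact (div_le_div_of_nonneg_right hexpect hθ.le).trans_eq (by ring)

theorem IsMultinomial.measure_lt_abs_stepCdf_sub_le {Ω : Type*} [MeasurableSpace Ω]
    {P : Measure Ω} [IsProbabilityMeasure P] {n M m : ℕ} {p : ℕ → ℝ} {X : ℕ → Ω → ℕ}
    {k : ℕ → ℕ} (hX : IsMultinomial P n M p X) (hmeas : ∀ i, Measurable (X i))
    (hp0 : ∀ i ∈ Icc 1 M, 0 ≤ p i) (hp : ∑ i ∈ Icc 1 M, p i = 1) (hn : 0 < n) (hM : 0 < M)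
    (hk : IsGrouping k m M) {g F : ℝ → ℝ} {x ε η C : ℝ} (hε : 0 < ε) (hη : 0 < η)
    (hclose : ∀ j ∈ Icc 1 m, ∀ u ∈ groupCell M k j, |groupMean M k p j - g u| ≤ η)
    (hC : ∀ u ∈ Set.Ioc (0 : ℝ) 1, g u ≤ C)
    (hF : ∀ y, F y = (volume.restrict (Set.Ioc (0 : ℝ) 1)).real {u | g u ≤ y})
    (hlo : F x - ε / 2 ≤ F (x - η - η)) (hhi : F (x + η + η) ≤ F x + ε / 2) :
    P {ω | ε < |groupedCellsEstimator n M m k (fun i => X i ω) x - F x|} ≤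
      ENNReal.ofReal (m * (C + η) / (ε / 2 * n * η ^ 2)) := by
  have hw : ∀ j ∈ Icc 1 m, 0 ≤ ((k j : ℝ) - k (j - 1)) / M := fun j hj =>
    div_nonneg (hk.sub_pos hj).le (Nat.cast_nonneg M)
  have hsandwich := hk.stepCdf_mem_Icc hM hclose
  refine (measure_mono fun ω hω => ?_).trans
    ((hX.measure_lt_sum_deviation_le hmeas hp0 hp hn hM hk hη (half_pos hε)).trans
      (ENNReal.ofReal_le_ofReal ?_))
  · rw [Set.mem_ofPred_eq, groupedCellsEstimator_eq_stepCdf] at hω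
    have habs := abs_stepCdf_sub_le (a := fun j => groupMean M k (fun i => X i ω) j / n) hw
      (hlo.trans ((hF _).trans_le (hsandwich (x - η)).1))
      (((hsandwich (x + η)).2.trans_eq (hF _).symm).trans hhi)
    show ε / 2 < _
    linarith
  · exact div_le_div_of_nonneg_right (hk.sum_groupMean_le hM hclose hC) (by positivity)

lemma ContinuousAt.exists_pos_sub_le_and_le_add {F : ℝ → ℝ} {x ε : ℝ} (hF : ContinuousAt F x)
    (hε : 0 < ε) : ∃ η > 0, F x - ε ≤ F (x - η - η) ∧ F (x + η + η) ≤ F x + ε := by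
  obtain ⟨δ, hδ, hFδ⟩ := Metric.continuousAt_iff.1 hF ε hε
  have hnear : ∀ y, |y - x| = δ / 2 → |F y - F x| < ε := fun y hy =>
    hFδ (by rw [Real.dist_eq, hy]; linarith)
  refine ⟨δ / 4, by positivity, ?_, ?_⟩
  · have := (abs_lt.1 (hnear (x - δ / 4 - δ / 4) (by rw [abs_of_neg (by linarith)]; ring))).1
    linarith
  · have := (abs_lt.1 (hnear (x + δ / 4 + δ / 4) (by rw [abs_of_pos (by linarith)]; ring))).2
    linarith

theorem stmt16_general (n M m : ℕ → ℕ) (hn : ∀ t, 0 < n t) (hM : ∀ t, 0 < M t)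
    (Ω : ℕ → Type*) [∀ t, MeasureSpace (Ω t)] (P : ∀ t, Measure (Ω t))
    [∀ t, IsProbabilityMeasure (P t)]
    (p : ℕ → ℕ → ℝ)
    (hp_nonneg : ∀ t, ∀ i ∈ Finset.Icc 1 (M t), 0 ≤ p t i)
    (hp_sum : ∀ t, ∑ i ∈ Finset.Icc 1 (M t), p t i = 1)
    (X : ∀ t : ℕ, ℕ → Ω t → ℕ) (hmeas : ∀ t i, Measurable (X t i))
    (hmult : ∀ t, IsMultinomial (P t) (n t) (M t) (p t) (X t))
    (k : ℕ → ℕ → ℕ) (hk0 : ∀ t, k t 0 = 0) (hkm : ∀ t, k t (m t) = M t)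
    (hkmono : ∀ t, ∀ j < m t, k t j < k t (j + 1))
    (hmn : Tendsto (fun t => (m t : ℝ) / (n t : ℝ)) atTop (nhds 0))
    (hgroups : ∀ ε > (0 : ℝ), ∃ N : ℕ, ∀ t ≥ N, ∀ j ∈ Finset.Icc 1 (m t),
      ((k t j : ℝ) - k t (j - 1)) / (M t) ≤ ε)
    (g : ℝ → ℝ) (hg : ContinuousOn g (Set.Icc (0 : ℝ) 1))
    (gM : ℕ → ℝ → ℝ)
    (hgM : ∀ t, ∀ u : ℝ, gM t u = ∑ i ∈ Finset.Icc 1 (M t),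
      (M t : ℝ) * p t i *
        (if u ∈ Set.Ioc (((i : ℝ) - 1) / (M t)) ((i : ℝ) / (M t)) then (1 : ℝ) else 0))
    (hsup : ∀ ε > (0 : ℝ), ∃ N : ℕ, ∀ t ≥ N, ∀ u ∈ Set.Ioc (0 : ℝ) 1, |gM t u - g u| ≤ ε)
    (Fhat : ∀ t : ℕ, Ω t → ℝ → ℝ)
    (hFhat : ∀ t ω x, Fhat t ω x = (1 / (M t) : ℝ) * ∑ j ∈ Finset.Icc 1 (m t),
      ((k t j : ℝ) - k t (j - 1)) *
        (if (M t : ℝ) * (∑ i ∈ Finset.Ioc (k t (j - 1)) (k t j), (X t i ω : ℝ)) /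
            ((n t : ℝ) * ((k t j : ℝ) - k t (j - 1))) ≤ x then (1 : ℝ) else 0))
    (F : ℝ → ℝ)
    (hF : ∀ x, F x = ((volume.restrict (Set.Ioc (0 : ℝ) 1)) {u | g u ≤ x}).toReal) :
    ∀ x : ℝ, ContinuousAt F x → ∀ ε > (0 : ℝ),
      Tendsto (fun t => P t {ω | ε < |Fhat t ω x - F x|}) atTop (nhds 0) := by
  intro x hx ε hε
  have hk : ∀ t, IsGrouping (k t) (m t) (M t) := fun t => ⟨hk0 t, hkm t, hkmono t⟩
  obtain ⟨η, hη, hlo, hhi⟩ := hx.exists_pos_sub_le_and_le_add (half_pos hε)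
  obtain ⟨ρ, hρ, hgρ⟩ := Metric.uniformContinuousOn_iff.1
    (isCompact_Icc.uniformContinuousOn_of_continuous hg) (η / 2) (half_pos hη)
  obtain ⟨C, hC⟩ := isCompact_Icc.exists_bound_of_continuousOn hg
  obtain ⟨N₁, hN₁⟩ := hsup (η / 2) (half_pos hη)
  obtain ⟨N₂, hN₂⟩ := hgroups (ρ / 2) (half_pos hρ)
  have hbound : ∀ t ≥ max N₁ N₂, P t {ω | ε < |Fhat t ω x - F x|} ≤
      ENNReal.ofReal ((C + η) / (ε / 2 * η ^ 2) * (m t / n t)) := fun t ht => by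
    have hclose : ∀ j ∈ Icc 1 (m t), ∀ u ∈ groupCell (M t) (k t) j,
        |groupMean (M t) (k t) (p t) j - g u| ≤ η := fun j hj u hu =>
      (hk t).abs_groupMean_sub_le (hM t)
        (fun i hi => abs_mul_sub_le_of_abs_sub_le (hM t) (hgM t) (hN₁ t (le_of_max_le_left ht)) hi)
        hgρ (fun j hj => (hN₂ t (le_of_max_le_right ht) j hj).trans_lt (half_lt_self hρ)) hj hu
    have hFhat' : ∀ ω, Fhat t ω x =
        groupedCellsEstimator (n t) (M t) (m t) (k t) (fun i => X t i ω) x := fun ω => hFhat t ω x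
    simp only [hFhat']
    refine ((hmult t).measure_lt_abs_stepCdf_sub_le (hmeas t) (hp_nonneg t) (hp_sum t) (hn t) (hM t)
      (hk t) hε hη hclose (fun u hu => (le_abs_self _).trans (hC u (Set.Ioc_subset_Icc_self hu)))
      hF hlo hhi).trans (ENNReal.ofReal_le_ofReal (le_of_eq ?_))
    have := hn t
    field_simp
  refine tendsto_of_tendsto_of_tendsto_of_le_of_le' tendsto_const_nhds ?_
    (Eventually.of_forall fun t => zero_le) ((eventually_ge_atTop (max N₁ N₂)).mono hbound)
  simpa using ENNReal.tendsto_ofReal (hmn.const_mul ((C + η) / (ε / 2 * η ^ 2)))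

/-- Consistency of the grouped cells estimator: if `m/n → 0`, the relative group sizes tend
to zero uniformly, and the parent densities converge uniformly on `(0,1]` to a continuous
`g` on `[0,1]`, then the grouped cells estimator `F̂_M` converges in probability, at every
continuity point, to `F`, the distribution function of `g(U)` with `U` uniform on `(0,1]`. -/
theorem stmt16 (n M m : ℕ → ℕ) (hn : ∀ t, 0 < n t) (hM : ∀ t, 0 < M t) (hm : ∀ t, 0 < m t)
    (Ω : ℕ → Type*) [∀ t, MeasureSpace (Ω t)] (P : ∀ t, Measure (Ω t))
    [∀ t, IsProbabilityMeasure (P t)]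
    (p : ℕ → ℕ → ℝ)
    (hp_nonneg : ∀ t, ∀ i ∈ Finset.Icc 1 (M t), 0 ≤ p t i)
    (hp_sum : ∀ t, ∑ i ∈ Finset.Icc 1 (M t), p t i = 1)
    (X : ∀ t : ℕ, ℕ → Ω t → ℕ) (hmeas : ∀ t i, Measurable (X t i))
    (hmult : ∀ t, IsMultinomial (P t) (n t) (M t) (p t) (X t))
    (k : ℕ → ℕ → ℕ) (hk0 : ∀ t, k t 0 = 0) (hkm : ∀ t, k t (m t) = M t)
    (hkmono : ∀ t, ∀ j < m t, k t j < k t (j + 1))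
    (hmn : Tendsto (fun t => (m t : ℝ) / (n t : ℝ)) atTop (nhds 0))
    (hgroups : ∀ ε > (0 : ℝ), ∃ N : ℕ, ∀ t ≥ N, ∀ j ∈ Finset.Icc 1 (m t),
      ((k t j : ℝ) - k t (j - 1)) / (M t) ≤ ε)
    (g : ℝ → ℝ) (hg : ContinuousOn g (Set.Icc (0 : ℝ) 1))
    (gM : ℕ → ℝ → ℝ)
    (hgM : ∀ t, ∀ u : ℝ, gM t u = ∑ i ∈ Finset.Icc 1 (M t),
      (M t : ℝ) * p t i *
        (if u ∈ Set.Ioc (((i : ℝ) - 1) / (M t)) ((i : ℝ) / (M t)) then (1 : ℝ) else 0))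
    (hsup : ∀ ε > (0 : ℝ), ∃ N : ℕ, ∀ t ≥ N, ∀ u ∈ Set.Ioc (0 : ℝ) 1, |gM t u - g u| ≤ ε)
    (Fhat : ∀ t : ℕ, Ω t → ℝ → ℝ)
    (hFhat : ∀ t ω x, Fhat t ω x = (1 / (M t) : ℝ) * ∑ j ∈ Finset.Icc 1 (m t),
      ((k t j : ℝ) - k t (j - 1)) *
        (if (M t : ℝ) * (∑ i ∈ Finset.Ioc (k t (j - 1)) (k t j), (X t i ω : ℝ)) /
            ((n t : ℝ) * ((k t j : ℝ) - k t (j - 1))) ≤ x then (1 : ℝ) else 0))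
    (F : ℝ → ℝ)
    (hF : ∀ x, F x = ((volume.restrict (Set.Ioc (0 : ℝ) 1)) {u | g u ≤ x}).toReal) :
    ∀ x : ℝ, ContinuousAt F x → ∀ ε > (0 : ℝ),
      Tendsto (fun t => P t {ω | ε < |Fhat t ω x - F x|}) atTop (nhds 0) :=
  stmt16_general n M m hn hM Ω P p hp_nonneg hp_sum X hmeas hmult k hk0 hkm hkmono hmn hgroups g hg
    gM hgM hsup Fhat hFhat F hF
end

section
/- (L1 Poissonization bound for the kernel estimator.) Let (X_i) and (Y_i), 1 ≤ i ≤ M, be coupled so that either X_i ≤ Y_i for all i or X_i ≥ Y_i for all i, with Σ X_i = n, Σ Y_i = N, and N ~ Poisson(n). Let w ≥ 0 and define F̂_M(x) = (1/M) Σ_{j=1}^M 1_{[(M/(nk)) Σ_i w((j−i)/k) X_i ≤ x]} and F̃_M analogously with Y_i. Then E ∫ |F̂_M − F̃_M| dx ≤ (Σ_{ℓ ∈ ℤ} (1/k) w(ℓ/k)) · E|N − n|/n. -/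
/-!
For a single realisation, the integral of `|1[a ≤ t] - 1[b ≤ t]|` over `t` is `|a - b|`, so the
L¹ distance between the two step functions is at most the mean distance between the kernel
smoothings at the grid points. Since the kernel weights are nonnegative and each column of the
kernel matrix sums to at most `∑ ℓ w(ℓ/k)`, this is bounded by `(1/(nk)) ∑ ℓ w(ℓ/k)` times
`∑ᵢ |Xᵢ - Yᵢ|`, which equals `|N - n|` because all differences `Xᵢ - Yᵢ` have the same sign.
Taking expectations finishes the proof; the Poisson law of `N` makes `|N - n|` integrable.
-/

open MeasureTheory ProbabilityTheory Finset

theorem Finset.sum_abs_sub_eq_abs_sum_sub {ι α : Type*} [AddCommGroup α] [LinearOrder α]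
    [IsOrderedAddMonoid α] {s : Finset ι} {x y : ι → α}
    (h : (∀ i ∈ s, x i ≤ y i) ∨ ∀ i ∈ s, y i ≤ x i) :
    ∑ i ∈ s, |x i - y i| = |∑ i ∈ s, x i - ∑ i ∈ s, y i| := by
  rw [← sum_sub_distrib]
  rcases h with h | h
  · rw [abs_of_nonpos (sum_nonpos fun i hi => sub_nonpos.2 (h i hi)), ← sum_neg_distrib]
    exact sum_congr rfl fun i hi => abs_of_nonpos (sub_nonpos.2 (h i hi))
  · rw [abs_of_nonneg (sum_nonneg fun i hi => sub_nonneg.2 (h i hi))]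
    exact sum_congr rfl fun i hi => abs_of_nonneg (sub_nonneg.2 (h i hi))

theorem abs_ite_le_sub_ite_le_of_le {a b : ℝ} (hab : a ≤ b) (t : ℝ) :
    |(if a ≤ t then (1 : ℝ) else 0) - if b ≤ t then 1 else 0| =
      (Set.Ico a b).indicator 1 t := by
  simp only [Set.indicator_apply, Set.mem_Ico, Pi.one_apply]
  grind

theorem integrable_abs_ite_le_sub_ite_le (a b : ℝ) :
    Integrable fun t : ℝ => |(if a ≤ t then (1 : ℝ) else 0) - if b ≤ t then 1 else 0| := by
  wlog hab : a ≤ b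
  · simpa only [abs_sub_comm] using this b a (le_of_not_ge hab)
  simp only [abs_ite_le_sub_ite_le_of_le hab]
  exact (integrable_indicator_iff measurableSet_Ico).2 (integrableOn_const measure_Ico_lt_top.ne)

theorem integral_abs_ite_le_sub_ite_le (a b : ℝ) :
    ∫ t : ℝ, |(if a ≤ t then (1 : ℝ) else 0) - if b ≤ t then 1 else 0| = |a - b| := by
  wlog hab : a ≤ b
  · simpa only [abs_sub_comm] using this b a (le_of_not_ge hab)
  simp only [abs_ite_le_sub_ite_le_of_le hab]
  rw [integral_indicator_one measurableSet_Ico, Real.volume_real_Ico_of_le hab, abs_sub_comm,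
    abs_of_nonneg (sub_nonneg.2 hab)]

theorem integral_abs_mul_sum_ite_sub_le {ι : Type*} (s : Finset ι) (c : ℝ) (a b : ι → ℝ) :
    ∫ t : ℝ, |c * ∑ j ∈ s, (if a j ≤ t then (1 : ℝ) else 0) -
        c * ∑ j ∈ s, (if b j ≤ t then (1 : ℝ) else 0)| ≤ |c| * ∑ j ∈ s, |a j - b j| := by
  have hint (j : ι) := integrable_abs_ite_le_sub_ite_le (a j) (b j)
  calc _ ≤ ∫ t : ℝ, |c| * ∑ j ∈ s,
        |(if a j ≤ t then (1 : ℝ) else 0) - if b j ≤ t then 1 else 0| := by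
        refine integral_mono_of_nonneg (.of_forall fun t => abs_nonneg _)
          ((integrable_finsetSum _ fun j _ => hint j).const_mul _) (.of_forall fun t => ?_)
        dsimp only
        rw [← mul_sub, ← sum_sub_distrib, abs_mul]
        gcongr
        exact abs_sum_le_sum_abs _ _
    _ = |c| * ∑ j ∈ s, |a j - b j| := by
        rw [integral_const_mul, integral_finsetSum _ fun j _ => hint j]
        simp only [integral_abs_ite_le_sub_ite_le]

theorem sum_natCast_sub_le_tsum {f : ℤ → ℝ} (hf : ∀ ℓ, 0 ≤ f ℓ) (hs : Summable f)
    (s : Finset ℕ) (i : ℕ) : ∑ j ∈ s, f (j - i) ≤ ∑' ℓ, f ℓ := by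
  rw [← sum_image (g := fun j : ℕ => (j : ℤ) - i) fun _ _ _ _ h => by simpa using h]
  exact hs.sum_le_tsum _ fun ℓ _ => hf ℓ

noncomputable def kernelSmoother (M n : ℕ) (kb : ℝ) (w : ℝ → ℝ) (x : ℕ → ℝ) (j : ℕ) : ℝ :=
  (M : ℝ) / ((n : ℝ) * kb) * ∑ i ∈ Icc 1 M, w (((j : ℝ) - (i : ℝ)) / kb) * x i

noncomputable def kernelCDF (M n : ℕ) (kb : ℝ) (w : ℝ → ℝ) (x : ℕ → ℝ) (t : ℝ) : ℝ :=
  (1 / M : ℝ) * ∑ j ∈ Icc 1 M, if kernelSmoother M n kb w x j ≤ t then (1 : ℝ) else 0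

section Kernel

variable {M n : ℕ} {kb : ℝ} {w : ℝ → ℝ}

theorem sum_abs_kernelSmoother_sub_le (hkb : 0 ≤ kb) (hw : ∀ u, 0 ≤ w u)
    (hsum : Summable fun ℓ : ℤ => w (ℓ / kb)) (x y : ℕ → ℝ) :
    ∑ j ∈ Icc 1 M, |kernelSmoother M n kb w x j - kernelSmoother M n kb w y j| ≤
      M / (n * kb) * (∑' ℓ : ℤ, w (ℓ / kb)) * ∑ i ∈ Icc 1 M, |x i - y i| := by
  have hmass (i : ℕ) : ∑ j ∈ Icc 1 M, w (((j : ℝ) - i) / kb) ≤ ∑' ℓ : ℤ, w (ℓ / kb) := by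
    simpa using sum_natCast_sub_le_tsum (fun ℓ => hw _) hsum (Icc 1 M) i
  have hc : (0 : ℝ) ≤ M / (n * kb) := by positivity
  simp only [kernelSmoother, ← mul_sub, ← sum_sub_distrib, abs_mul, abs_of_nonneg hc, ← mul_sum,
    mul_assoc]
  gcongr
  calc _ ≤ ∑ j ∈ Icc 1 M, ∑ i ∈ Icc 1 M, w (((j : ℝ) - i) / kb) * |x i - y i| := by
        gcongr with j
        refine (abs_sum_le_sum_abs _ _).trans_eq (sum_congr rfl fun i _ => ?_)
        rw [abs_mul, abs_of_nonneg (hw _)]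
    _ = ∑ i ∈ Icc 1 M, (∑ j ∈ Icc 1 M, w (((j : ℝ) - i) / kb)) * |x i - y i| := by
        rw [sum_comm]
        simp only [sum_mul]
    _ ≤ ∑ i ∈ Icc 1 M, (∑' ℓ : ℤ, w (ℓ / kb)) * |x i - y i| := by
        gcongr with i
        exact hmass i
    _ = _ := (mul_sum _ _ _).symm

theorem integral_abs_kernelCDF_sub_le (hkb : 0 ≤ kb) (hw : ∀ u, 0 ≤ w u)
    (hsum : Summable fun ℓ : ℤ => w (ℓ / kb)) (x y : ℕ → ℝ) :
    ∫ t : ℝ, |kernelCDF M n kb w x t - kernelCDF M n kb w y t| ≤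
      (∑' ℓ : ℤ, 1 / kb * w (ℓ / kb)) / n * ∑ i ∈ Icc 1 M, |x i - y i| := by
  set S := ∑' ℓ : ℤ, w (ℓ / kb)
  have hS : 0 ≤ S := tsum_nonneg fun ℓ => hw _
  calc _ ≤ |1 / (M : ℝ)| * ∑ j ∈ Icc 1 M,
        |kernelSmoother M n kb w x j - kernelSmoother M n kb w y j| :=
        integral_abs_mul_sum_ite_sub_le _ _ _ _
    _ ≤ 1 / M * (M / (n * kb) * S * ∑ i ∈ Icc 1 M, |x i - y i|) := by
        rw [abs_of_nonneg (by positivity)]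
        gcongr
        exact sum_abs_kernelSmoother_sub_le hkb hw hsum x y
    _ = M / M * (S / (n * kb) * ∑ i ∈ Icc 1 M, |x i - y i|) := by ring
    _ ≤ S / (n * kb) * ∑ i ∈ Icc 1 M, |x i - y i| :=
        mul_le_of_le_one_left (by positivity) (div_self_le_one _)
    _ = _ := by rw [tsum_mul_left]; ring

end Kernel

theorem integrable_natCast_poissonMeasure (r : NNReal) :
    Integrable (fun m : ℕ => (m : ℝ)) (poissonMeasure r) := by
  rw [integrable_poissonMeasure_iff, ← summable_nat_add_iff 1]
  refine ((hasSum_one_poissonMeasure r).summable.mul_left (r : ℝ)).congr fun m => ?_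
  rw [Nat.factorial_succ, Real.norm_natCast]
  push_cast
  field_simp
  ring

theorem integrable_natCast_of_map_eq_poissonMeasure {Ω : Type*} [MeasurableSpace Ω]
    {P : Measure Ω} {N : Ω → ℕ} {r : NNReal} (h : P.map N = poissonMeasure r) :
    Integrable (fun ω => (N ω : ℝ)) P := by
  have hN : AEMeasurable N P := by
    by_contra hN
    rw [Measure.map_of_not_aemeasurable hN] at h
    exact IsProbabilityMeasure.ne_zero _ h.symm
  have := integrable_natCast_poissonMeasure r
  rw [← h] at this
  exact (integrable_map_measure measurable_from_nat.aestronglyMeasurable hN).1 this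

theorem stmt17_general {Ω : Type*} [MeasureSpace Ω] (P : Measure Ω) [IsProbabilityMeasure P]
    (M n : ℕ) (kb : ℝ) (hkb : 0 < kb)
    (w : ℝ → ℝ) (hw_nonneg : ∀ u, 0 ≤ w u)
    (hw_summable : Summable (fun ℓ : ℤ => w ((ℓ : ℝ) / kb)))
    (X Y : ℕ → Ω → ℕ)
    (hcoup : ∀ ω, (∀ i ∈ Finset.Icc 1 M, X i ω ≤ Y i ω) ∨
      (∀ i ∈ Finset.Icc 1 M, Y i ω ≤ X i ω))
    (hX : ∀ ω, ∑ i ∈ Finset.Icc 1 M, X i ω = n)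
    (N : Ω → ℕ) (hN : ∀ ω, N ω = ∑ i ∈ Finset.Icc 1 M, Y i ω)
    (hpois : Measure.map N P = poissonMeasure (n : NNReal))
    (Fhat Ftilde : Ω → ℝ → ℝ)
    (hFhat : ∀ ω x, Fhat ω x = (1 / M : ℝ) * ∑ j ∈ Finset.Icc 1 M,
      (if (M : ℝ) / ((n : ℝ) * kb) *
          ∑ i ∈ Finset.Icc 1 M, w (((j : ℝ) - (i : ℝ)) / kb) * (X i ω : ℝ) ≤ x
        then (1 : ℝ) else 0))
    (hFtilde : ∀ ω x, Ftilde ω x = (1 / M : ℝ) * ∑ j ∈ Finset.Icc 1 M,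
      (if (M : ℝ) / ((n : ℝ) * kb) *
          ∑ i ∈ Finset.Icc 1 M, w (((j : ℝ) - (i : ℝ)) / kb) * (Y i ω : ℝ) ≤ x
        then (1 : ℝ) else 0)) :
    ∫ ω, (∫ x : ℝ, |Fhat ω x - Ftilde ω x|) ∂P ≤
      (∑' ℓ : ℤ, (1 / kb) * w ((ℓ : ℝ) / kb)) *
        (∫ ω, |(N ω : ℝ) - (n : ℝ)| ∂P) / n := by
  set C := (∑' ℓ : ℤ, (1 / kb) * w ((ℓ : ℝ) / kb)) / n
  have hpoint (ω : Ω) : ∫ x : ℝ, |Fhat ω x - Ftilde ω x| ≤ C * |(N ω : ℝ) - n| := by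
    have hXY : ∑ i ∈ Icc 1 M, |(X i ω : ℝ) - Y i ω| = |(N ω : ℝ) - n| := by
      rw [sum_abs_sub_eq_abs_sum_sub (by exact_mod_cast hcoup ω), abs_sub_comm, hN ω, ← hX ω,
        Nat.cast_sum, Nat.cast_sum]
    have hFX : Fhat ω = kernelCDF M n kb w (fun i => X i ω) := funext (hFhat ω)
    have hFY : Ftilde ω = kernelCDF M n kb w (fun i => Y i ω) := funext (hFtilde ω)
    rw [hFX, hFY, ← hXY]
    exact integral_abs_kernelCDF_sub_le hkb.le hw_nonneg hw_summable _ _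
  have hint : Integrable (fun ω => |(N ω : ℝ) - n|) P :=
    ((integrable_natCast_of_map_eq_poissonMeasure hpois).sub (integrable_const _)).abs
  calc _ ≤ ∫ ω, C * |(N ω : ℝ) - n| ∂P :=
        integral_mono_of_nonneg (.of_forall fun ω => integral_nonneg fun x => abs_nonneg _)
          (hint.const_mul C) (.of_forall hpoint)
    _ = _ := by rw [integral_const_mul, div_mul_eq_mul_div]

/-- L1 Poissonization bound for the kernel estimator: if `X_i` and `Y_i` are coupled so that
`X_i ≤ Y_i` for all `i` or `X_i ≥ Y_i` for all `i` (pointwise), with `Σ X_i = n`,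
`Σ Y_i = N` and `N ~ Poisson(n)`, then for the kernel estimator `F̂_M` and its Poissonized
version `F̃_M`, `E ∫ |F̂_M − F̃_M| dx ≤ (Σ_{ℓ∈ℤ} (1/k) w(ℓ/k)) · E|N − n| / n`. -/
theorem stmt17 {Ω : Type*} [MeasureSpace Ω] (P : Measure Ω) [IsProbabilityMeasure P]
    (M n : ℕ) (hM : 0 < M) (hn : 0 < n) (kb : ℝ) (hkb : 0 < kb)
    (w : ℝ → ℝ) (hw_nonneg : ∀ u, 0 ≤ w u)
    (hw_summable : Summable (fun ℓ : ℤ => w ((ℓ : ℝ) / kb)))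
    (X Y : ℕ → Ω → ℕ) (hmeasX : ∀ i, Measurable (X i)) (hmeasY : ∀ i, Measurable (Y i))
    (hcoup : ∀ ω, (∀ i ∈ Finset.Icc 1 M, X i ω ≤ Y i ω) ∨
      (∀ i ∈ Finset.Icc 1 M, Y i ω ≤ X i ω))
    (hX : ∀ ω, ∑ i ∈ Finset.Icc 1 M, X i ω = n)
    (N : Ω → ℕ) (hN : ∀ ω, N ω = ∑ i ∈ Finset.Icc 1 M, Y i ω)
    (hpois : Measure.map N P = poissonMeasure (n : NNReal))
    (Fhat Ftilde : Ω → ℝ → ℝ)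
    (hFhat : ∀ ω x, Fhat ω x = (1 / M : ℝ) * ∑ j ∈ Finset.Icc 1 M,
      (if (M : ℝ) / ((n : ℝ) * kb) *
          ∑ i ∈ Finset.Icc 1 M, w (((j : ℝ) - (i : ℝ)) / kb) * (X i ω : ℝ) ≤ x
        then (1 : ℝ) else 0))
    (hFtilde : ∀ ω x, Ftilde ω x = (1 / M : ℝ) * ∑ j ∈ Finset.Icc 1 M,
      (if (M : ℝ) / ((n : ℝ) * kb) *
          ∑ i ∈ Finset.Icc 1 M, w (((j : ℝ) - (i : ℝ)) / kb) * (Y i ω : ℝ) ≤ x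
        then (1 : ℝ) else 0)) :
    ∫ ω, (∫ x : ℝ, |Fhat ω x - Ftilde ω x|) ∂P ≤
      (∑' ℓ : ℤ, (1 / kb) * w ((ℓ : ℝ) / kb)) *
        (∫ ω, |(N ω : ℝ) - (n : ℝ)| ∂P) / n :=
  stmt17_general P M n kb hkb w hw_nonneg hw_summable X Y hcoup hX N hN hpois Fhat Ftilde hFhat
    hFtilde
end
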